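/- arXiv:2504.16028 — 3 statements merged into one kernel-verified Lean document; each statement's English description precedes it below -/
import Mathlib

section
/- Let n ≥ 1, let x̄ ∈ ℝⁿ with x̄ ≥ 0 componentwise, and let a > 0. Then the sublevel set { y ∈ ℝⁿ : y > 0 componentwise and d_h(x̄, y) ≤ a } is bounded, where d_h(x̄, y) = Σ_{k=1}^n (x̄_k log x̄_k − x̄_k log y_k − x̄_k + y_k) with the convention 0 · log 0 = 0. -/
lemma ent_term_nonneg (x y : ℝ) (hx : 0 ≤ x) (hy : 0 < y) :
    0 ≤ x * Real.log x - x * Real.log y - x + y := by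
  rcases eq_or_lt_of_le hx with h | h
  · simp [← h]; linarith
  · have hlog : Real.log (y / x) ≤ y / x - 1 :=
      Real.log_le_sub_one_of_pos (by positivity)
    have hdiv : Real.log (y / x) = Real.log y - Real.log x :=
      Real.log_div hy.ne' h.ne'
    have h1 : x * Real.log (y / x) ≤ x * (y / x - 1) :=
      mul_le_mul_of_nonneg_left hlog h.le
    have hx' : x * (y / x - 1) = y - x := by field_simp
    have h2 : x * Real.log (y / x) = x * Real.log y - x * Real.log x := by
      rw [hdiv]; ring
    linarith

lemma ent_term_bound (x y a : ℝ) (hx : 0 ≤ x) (hy : 0 < y) (ha : 0 < a)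
    (h : x * Real.log x - x * Real.log y - x + y ≤ a) :
    y ≤ 2 * (a + x * Real.log 2) := by
  rcases eq_or_lt_of_le hx with hx0 | hx0
  · have hy' : y ≤ a := by
      have : (0:ℝ) * Real.log 0 - 0 * Real.log y - 0 + y ≤ a := by rwa [← hx0] at h
      linarith [this]
    have : x * Real.log 2 = 0 := by rw [← hx0]; ring
    linarith
  · have h2x : 0 < 2 * x := by linarith
    have hlog : Real.log (y / (2 * x)) ≤ y / (2 * x) - 1 :=
      Real.log_le_sub_one_of_pos (by positivity)
    have h1 : x * Real.log (y / (2 * x)) ≤ x * (y / (2 * x) - 1) :=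
      mul_le_mul_of_nonneg_left hlog hx0.le
    have hx' : x * (y / (2 * x) - 1) = y / 2 - x := by field_simp
    have hsplit : Real.log (y / (2 * x)) = Real.log y - (Real.log 2 + Real.log x) := by
      rw [Real.log_div hy.ne' h2x.ne', Real.log_mul (by norm_num) hx0.ne']
    have h2 : x * Real.log (y / (2 * x))
        = x * Real.log y - x * Real.log 2 - x * Real.log x := by
      rw [hsplit]; ring
    linarith

/-- Sublevel sets of the entropy Bregman divergence
`d_h(x̄, ·) = Σ (x̄_k log x̄_k − x̄_k log y_k − x̄_k + y_k)` on the positive orthant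
are bounded. -/
theorem bregman_sublevel_bounded (n : ℕ) (hn : 1 ≤ n) (xbar : Fin n → ℝ)
    (hx : ∀ k, 0 ≤ xbar k) (a : ℝ) (ha : 0 < a) :
    Bornology.IsBounded {y : Fin n → ℝ | (∀ k, 0 < y k) ∧
      ∑ k, (xbar k * Real.log (xbar k) - xbar k * Real.log (y k) - xbar k + y k) ≤ a} := by
  set B : Fin n → ℝ := fun k => 2 * (a + xbar k * Real.log 2) with hB
  have hsub : {y : Fin n → ℝ | (∀ k, 0 < y k) ∧
      ∑ k, (xbar k * Real.log (xbar k) - xbar k * Real.log (y k) - xbar k + y k) ≤ a}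
      ⊆ Set.Icc (0 : Fin n → ℝ) B := by
    rintro y ⟨hy, hsum⟩
    constructor
    · intro k; exact (hy k).le
    · intro k
      have hterm : xbar k * Real.log (xbar k) - xbar k * Real.log (y k) - xbar k + y k ≤ a := by
        calc xbar k * Real.log (xbar k) - xbar k * Real.log (y k) - xbar k + y k
            ≤ ∑ j, (xbar j * Real.log (xbar j) - xbar j * Real.log (y j) - xbar j + y j) :=
              Finset.single_le_sum (fun j _ => ent_term_nonneg _ _ (hx j) (hy j))
                (Finset.mem_univ k)
          _ ≤ a := hsum
      exact ent_term_bound _ _ _ (hx k) (hy k) ha hterm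
  exact (isCompact_Icc.isBounded).subset hsub
end

section
/- Let K be a real m × n matrix, c : ℝⁿ → ℝⁿ a map, and ϑ̄ ∈ ℝⁿ with ϑ̄ ≥ 0. Let ϑ : [0, ∞) → ℝⁿ be differentiable with ϑ(t) > 0 componentwise, K ϑ(t) = K ϑ̄ for all t, and suppose ϑ'(t) = −H(ϑ(t))⁻¹ F(ϑ(t)) c(ϑ(t)) for all t, where H(y) = diag(1/y₁, …, 1/yₙ), F(y) = I − Kᵀ (K H(y)⁻¹ Kᵀ)⁻¹ K H(y)⁻¹, and K H(ϑ(t))⁻¹ Kᵀ is invertible for all t. Then for all t ≥ 0, the derivative of t ↦ d_h(ϑ̄, ϑ(t)) equals ⟨ϑ̄ − ϑ(t), c(ϑ(t))⟩. -/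
open Matrix

/-- The Hessian of the entropy `h(y) = Σ y_k log y_k`: `H(y) = diag(1/y₁, …, 1/yₙ)`. -/
noncomputable def entropyHessian (n : ℕ) (y : Fin n → ℝ) : Matrix (Fin n) (Fin n) ℝ :=
  Matrix.diagonal fun k => (y k)⁻¹

/-- The Hessian–Riemannian projection matrix
`F(y) = I − Kᵀ (K H(y)⁻¹ Kᵀ)⁻¹ K H(y)⁻¹`. -/
noncomputable def projMatrix (n m : ℕ) (K : Matrix (Fin m) (Fin n) ℝ)
    (y : Fin n → ℝ) : Matrix (Fin n) (Fin n) ℝ :=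
  1 - Kᵀ * (K * (entropyHessian n y)⁻¹ * Kᵀ)⁻¹ * (K * (entropyHessian n y)⁻¹)

/-- Along the Hessian–Riemannian flow `ϑ' = −H(ϑ)⁻¹ F(ϑ) c(ϑ)` satisfying
`K ϑ(t) = K ϑ̄`, the derivative of `t ↦ d_h(ϑ̄, ϑ(t))` equals
`⟨ϑ̄ − ϑ(t), c(ϑ(t))⟩`. -/
theorem bregman_deriv_along_flow (n m : ℕ) (K : Matrix (Fin m) (Fin n) ℝ)
    (c : (Fin n → ℝ) → (Fin n → ℝ)) (ϑbar : Fin n → ℝ) (hϑbar : ∀ k, 0 ≤ ϑbar k)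
    (ϑ : ℝ → Fin n → ℝ)
    (hpos : ∀ t ≥ (0 : ℝ), ∀ k, 0 < ϑ t k)
    (hconstr : ∀ t ≥ (0 : ℝ), K.mulVec (ϑ t) = K.mulVec ϑbar)
    (hinv : ∀ t ≥ (0 : ℝ), IsUnit (K * (entropyHessian n (ϑ t))⁻¹ * Kᵀ))
    (hode : ∀ t ≥ (0 : ℝ), HasDerivAt ϑ
      (-((entropyHessian n (ϑ t))⁻¹.mulVec
        ((projMatrix n m K (ϑ t)).mulVec (c (ϑ t))))) t) :
    ∀ t ≥ (0 : ℝ), HasDerivAt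
      (fun s => ∑ k, (ϑbar k * Real.log (ϑbar k) - ϑbar k * Real.log (ϑ s k)
        - ϑbar k + ϑ s k))
      (∑ k, (ϑbar k - ϑ t k) * c (ϑ t) k) t := by
  intro t ht
  have hpos' := hpos t ht
  set w : Fin n → ℝ := (projMatrix n m K (ϑ t)).mulVec (c (ϑ t)) with hw
  -- H(ϑ t)⁻¹ = diag(ϑ t)
  have hHinv : (entropyHessian n (ϑ t))⁻¹ = Matrix.diagonal (fun k => ϑ t k) := by
    refine Matrix.inv_eq_right_inv ?_
    rw [entropyHessian, Matrix.diagonal_mul_diagonal,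
      show (fun k => (ϑ t k)⁻¹ * ϑ t k) = fun _ => (1 : ℝ) from
        funext fun k => inv_mul_cancel₀ (hpos' k).ne', Matrix.diagonal_one]
  -- componentwise derivative of ϑ
  have hvk : ∀ k, HasDerivAt (fun s => ϑ s k) (-(ϑ t k * w k)) t := by
    intro k
    have h := hasDerivAt_pi.mp (hode t ht) k
    refine h.congr_deriv ?_
    rw [hHinv]
    simp only [Pi.neg_apply, Matrix.mulVec_diagonal, hw]
  -- derivative of each summand
  have hterm : ∀ k, HasDerivAt
      (fun s => ϑbar k * Real.log (ϑbar k) - ϑbar k * Real.log (ϑ s k)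
        - ϑbar k + ϑ s k) ((ϑbar k - ϑ t k) * w k) t := by
    intro k
    have hlog : HasDerivAt (fun s => Real.log (ϑ s k))
        ((ϑ t k)⁻¹ * -(ϑ t k * w k)) t :=
      by have := (Real.hasDerivAt_log (ne_of_gt (hpos' k))).comp t (hvk k); exact this
    have h1 : HasDerivAt (fun s => ϑbar k * Real.log (ϑbar k)
        - ϑbar k * Real.log (ϑ s k) - ϑbar k + ϑ s k)
        (0 - ϑbar k * ((ϑ t k)⁻¹ * -(ϑ t k * w k)) - 0 + -(ϑ t k * w k)) t :=
      (((hasDerivAt_const t _).sub (hlog.const_mul _)).sub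
        (hasDerivAt_const t _)).add (hvk k)
    convert h1 using 1
    field_simp [ne_of_gt (hpos' k)]
    ring
  have hsum : HasDerivAt
      (fun s => ∑ k, (ϑbar k * Real.log (ϑbar k) - ϑbar k * Real.log (ϑ s k)
        - ϑbar k + ϑ s k)) (∑ k, (ϑbar k - ϑ t k) * w k) t :=
    HasDerivAt.fun_sum (fun k _ => hterm k)
  convert hsum using 1
  -- algebra: Σ (ϑbar - ϑ t) k * w k = Σ (ϑbar - ϑ t) k * c (ϑ t) k
  have hdot : ∀ u : Fin n → ℝ, ∑ k, (ϑbar k - ϑ t k) * u k = (ϑbar - ϑ t) ⬝ᵥ u := by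
    intro u; simp [dotProduct, Pi.sub_apply, sub_mul]
  have hK0 : K.mulVec (ϑbar - ϑ t) = 0 := by
    rw [Matrix.mulVec_sub, hconstr t ht, sub_self]
  rw [hdot, hdot, hw, projMatrix, Matrix.sub_mulVec, Matrix.one_mulVec,
    dotProduct_sub, Matrix.mul_assoc, Matrix.dotProduct_mulVec,
    ← Matrix.vecMul_vecMul, Matrix.vecMul_transpose, hK0, Matrix.zero_vecMul,
    zero_dotProduct, sub_zero]
end

section
/- Let K be a real m × n matrix, B ∈ ℝ^m, A = {ϑ ∈ ℝⁿ : ϑ ≥ 0, K ϑ = B}, and c : ℝⁿ → ℝⁿ. Suppose ϑ̄ ∈ A satisfies ϑ̄ > 0 componentwise and ⟨c(ϑ̄), ϑ̄ − ϑ⟩ ≤ 0 for all ϑ ∈ A, and suppose K H(ϑ̄)⁻¹ Kᵀ is invertible, where H(y) = diag(1/y₁, …, 1/yₙ). Then ϑ̄ is an equilibrium point of the Hessian Riemannian flow: F(ϑ̄) c(ϑ̄) = 0, where F(y) = I − Kᵀ (K H(y)⁻¹ Kᵀ)⁻¹ K H(y)⁻¹; in particular H(ϑ̄)⁻¹ F(ϑ̄)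 c(ϑ̄) = 0. -/
/-!
Because `ϑ̄ > 0`, the line `ϑ̄ + t v` stays in `A` for small `|t|` whenever `K v = 0`, and the
variational inequality says that `ϑ̄` minimises `⟨c(ϑ̄), ·⟩` on `A`; so `c(ϑ̄) ⊥ ker K`, i.e.
`c(ϑ̄) = Kᵀ μ` for some `μ`. Finally `F(y) Kᵀ = Kᵀ - Kᵀ (K H⁻¹ Kᵀ)⁻¹ (K H⁻¹ Kᵀ) = 0`.
-/

open Matrix

open Filter Topology

theorem Matrix.exists_transpose_mulVec_eq_of_dotProduct_eq_zero {𝕜 m n : Type*} [Field 𝕜]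
    [Fintype m] [Fintype n] [DecidableEq m] [DecidableEq n] (K : Matrix m n 𝕜) {c : n → 𝕜}
    (hc : ∀ v, K *ᵥ v = 0 → c ⬝ᵥ v = 0) : ∃ μ, Kᵀ *ᵥ μ = c := by
  have hann : dotProductEquiv 𝕜 n c ∈ (LinearMap.ker K.mulVecLin).dualAnnihilator := by
    simpa [Submodule.mem_dualAnnihilator] using hc
  obtain ⟨ψ, hψ⟩ := LinearMap.range_dualMap_eq_dualAnnihilator_ker K.mulVecLin ▸ hann
  obtain ⟨μ, rfl⟩ := (dotProductEquiv 𝕜 m).surjective ψ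
  refine ⟨μ, (dotProductEquiv 𝕜 n).injective (LinearMap.ext fun v => ?_)⟩
  rw [← hψ]
  simp [mulVec_transpose, dotProduct_mulVec]

theorem dotProduct_eq_zero_of_isMinOn_of_pos {m n : Type*} [Fintype m] [Fintype n]
    (K : Matrix m n ℝ) {x c : n → ℝ} (hx : ∀ k, 0 < x k)
    (hmin : IsMinOn (c ⬝ᵥ ·) {ϑ | (∀ k, 0 ≤ ϑ k) ∧ K *ᵥ ϑ = K *ᵥ x} x)
    {v : n → ℝ} (hv : K *ᵥ v = 0) : c ⬝ᵥ v = 0 := by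
  have hline : (fun t : ℝ => c ⬝ᵥ (x + t • v)) = fun t => c ⬝ᵥ x + t * c ⬝ᵥ v := by
    funext t
    rw [dotProduct_add, dotProduct_smul, smul_eq_mul]
  have hderiv : HasDerivAt (fun t : ℝ => c ⬝ᵥ (x + t • v)) (c ⬝ᵥ v) 0 := by
    rw [hline]
    simpa using ((hasDerivAt_id (0 : ℝ)).mul_const (c ⬝ᵥ v)).const_add (c ⬝ᵥ x)
  have hinterior : ∀ᶠ t in 𝓝 (0 : ℝ), ∀ k, 0 < x k + t * v k := by
    refine eventually_all.2 fun k => ?_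
    have hcont : Continuous fun t : ℝ => x k + t * v k := by fun_prop
    exact continuousAt_const.eventually_lt hcont.continuousAt (by simpa using hx k)
  have hloc : IsLocalMin (fun t : ℝ => c ⬝ᵥ (x + t • v)) 0 := by
    filter_upwards [hinterior] with t ht
    simpa using isMinOn_iff.1 hmin (x + t • v) ⟨fun k => by simpa using (ht k).le,
      by rw [mulVec_add, mulVec_smul, hv, smul_zero, add_zero]⟩
  exact hloc.hasDerivAt_eq_zero hderiv

theorem projMatrix_mul_transpose {n m : ℕ} {K : Matrix (Fin m) (Fin n) ℝ} {y : Fin n → ℝ}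
    (hinv : IsUnit (K * (entropyHessian n y)⁻¹ * Kᵀ)) : projMatrix n m K y * Kᵀ = 0 := by
  rw [projMatrix, Matrix.sub_mul, Matrix.one_mul, Matrix.mul_assoc, Matrix.mul_assoc,
    nonsing_inv_mul _ ((isUnit_iff_isUnit_det _).mp hinv), Matrix.mul_one, sub_self]

/-- An interior Wardrop equilibrium `ϑ̄ > 0` on `A = {ϑ : ϑ ≥ 0, K ϑ = B}` is an
equilibrium point of the Hessian–Riemannian flow: `F(ϑ̄) c(ϑ̄) = 0`, and in
particular `H(ϑ̄)⁻¹ F(ϑ̄) c(ϑ̄) = 0`. -/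
theorem equilibrium_point_of_flow (n m : ℕ) (K : Matrix (Fin m) (Fin n) ℝ)
    (B : Fin m → ℝ) (A : Set (Fin n → ℝ))
    (hA : A = {ϑ : Fin n → ℝ | (∀ k, 0 ≤ ϑ k) ∧ K.mulVec ϑ = B})
    (c : (Fin n → ℝ) → (Fin n → ℝ))
    (ϑbar : Fin n → ℝ) (hmem : ϑbar ∈ A) (hpos : ∀ k, 0 < ϑbar k)
    (hVI : ∀ ϑ ∈ A, ∑ k, c ϑbar k * (ϑbar k - ϑ k) ≤ 0)
    (hinv : IsUnit (K * (entropyHessian n ϑbar)⁻¹ * Kᵀ)) :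
    (projMatrix n m K ϑbar).mulVec (c ϑbar) = 0 ∧
    (entropyHessian n ϑbar)⁻¹.mulVec ((projMatrix n m K ϑbar).mulVec (c ϑbar)) = 0 := by
  subst hA
  have hmin : IsMinOn (c ϑbar ⬝ᵥ ·) {ϑ | (∀ k, 0 ≤ ϑ k) ∧ K *ᵥ ϑ = K *ᵥ ϑbar} ϑbar := by
    refine isMinOn_iff.2 fun ϑ ⟨hϑ, hKϑ⟩ => ?_
    have h : c ϑbar ⬝ᵥ (ϑbar - ϑ) ≤ 0 := hVI ϑ ⟨hϑ, hKϑ.trans hmem.2⟩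
    rw [dotProduct_sub] at h
    linarith
  obtain ⟨μ, hμ⟩ := K.exists_transpose_mulVec_eq_of_dotProduct_eq_zero fun v hv =>
    dotProduct_eq_zero_of_isMinOn_of_pos K hpos hmin hv
  have hF : projMatrix n m K ϑbar *ᵥ c ϑbar = 0 := by
    rw [← hμ, mulVec_mulVec, projMatrix_mul_transpose hinv, zero_mulVec]
  exact ⟨hF, by rw [hF, mulVec_zero]⟩
end
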